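/- arXiv:0902.0964 — 2 statements merged into one kernel-verified Lean document; each statement's English description precedes it below -/
import Mathlib

section
/- Newman's periodicity theorem: If a finite set A ⊂ ℤ tiles the integers, i.e., there exists C ⊂ ℤ such that every integer has a unique representation n = a + c with a ∈ A, c ∈ C, then the tiling is periodic: there exists M > 0 and a finite set B ⊂ ℤ with C = B + Mℤ and |A|·|B| = M. -/
/-!
Let `m` and `m + D` be the least and greatest elements of `A`. The integer `n + m` is covered
either by `m + n` or by `a + (n + m - a)` with `m < a`, and then `n + m - a ∈ [n - D, n)`. So
whether `n ∈ C` is determined by the `D` positions before `n` and, reflecting through `0`, by the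
`D` positions after it. Only finitely many windows `C ∩ [x, x + D)` are possible, so two of them,
at `x ≠ y`, agree; then the translate of `C` by `y - x` is a tiling that agrees with `C` on a
window, hence equals `C`. For a period `M > 0`, `(a, b) ↦ (a + b) % M` is a bijection from
`A × (C ∩ [0, M))` onto `[0, M)`, which gives `|A| · |C ∩ [0, M)| = M`.
-/

open Set Function
open scoped Pointwise

def IsTiling {G : Type*} [AddCommGroup G] (A C : Set G) : Prop :=
  ∀ n : G, ∃! p : G × G, p.1 ∈ A ∧ p.2 ∈ C ∧ p.1 + p.2 = n

namespace IsTiling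

section AddCommGroup

variable {G : Type*} [AddCommGroup G] {A C : Set G}

theorem nonempty (ht : IsTiling A C) : A.Nonempty :=
  let ⟨p, hp, _⟩ := ht 0
  ⟨p.1, hp.1⟩

theorem eq_and_eq_of_add_eq (ht : IsTiling A C) {a a' c c' : G} (ha : a ∈ A) (hc : c ∈ C)
    (ha' : a' ∈ A) (hc' : c' ∈ C) (h : a + c = a' + c') : a = a' ∧ c = c' := by
  obtain ⟨p, _, hp⟩ := ht (a' + c')
  simpa [Prod.ext_iff] using (hp (a, c) ⟨ha, hc, h⟩).trans (hp (a', c') ⟨ha', hc', rfl⟩).symm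

theorem neg (ht : IsTiling A C) : IsTiling (-A) (-C) := by
  intro n
  obtain ⟨p, ⟨ha, hc, hn⟩, hp⟩ := ht (-n)
  refine ⟨-p, ⟨by simpa, by simpa, ?_⟩, fun q ⟨ha', hc', hq⟩ => neg_eq_iff_eq_neg.1 ?_⟩
  · rw [Prod.fst_neg, Prod.snd_neg, ← neg_add, hn, neg_neg]
  · exact hp (-q) ⟨ha', hc', by rw [Prod.fst_neg, Prod.snd_neg, ← neg_add, hq]⟩

theorem preimage_add_right (ht : IsTiling A C) (t : G) : IsTiling A ((· + t) ⁻¹' C) := by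
  intro n
  obtain ⟨p, ⟨ha, hc, hn⟩, hp⟩ := ht (n + t)
  refine ⟨(p.1, p.2 - t), ⟨ha, by simpa using hc, ?_⟩, ?_⟩
  · rw [← add_sub_assoc, hn, add_sub_cancel_right]
  · rintro ⟨a, c⟩ ⟨ha', hc', hq⟩
    have := Prod.ext_iff.1 (hp (a, c + t) ⟨ha', hc', by rw [← add_assoc, ← hq]⟩)
    exact Prod.ext this.1 (eq_sub_of_add_eq this.2)

theorem mem_iff_forall_notMem (ht : IsTiling A C) {m : G} (hm : m ∈ A) (n : G) :
    n ∈ C ↔ ∀ a ∈ A, a ≠ m → n + m - a ∉ C := by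
  refine ⟨fun hn a ha hne hc => hne ?_, fun h => ?_⟩
  · exact (ht.eq_and_eq_of_add_eq ha hc hm hn (by abel)).1
  · obtain ⟨⟨a, c⟩, ⟨ha, hc, hac⟩, -⟩ := ht (n + m)
    by_cases hne : a = m
    · subst hne
      rwa [← add_left_cancel (hac.trans (add_comm n a))]
    · exact absurd (by rwa [← hac, add_sub_cancel_left]) (h a ha hne)

end AddCommGroup

variable {A C C' : Set ℤ} {m x : ℤ} {D : ℕ}

theorem agree_Ici_of_agree_Ico (ht : IsTiling A C) (ht' : IsTiling A C') (hm : m ∈ A)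
    (hA : A ⊆ Icc m (m + D)) (h : ∀ n ∈ Ico x (x + D), n ∈ C ↔ n ∈ C') :
    ∀ n ∈ Ici x, n ∈ C ↔ n ∈ C' := by
  intro n
  induction n using Int.strongRec (m := x + D) with
  | lt n hn => exact fun hx => h n ⟨hx, hn⟩
  | ge n hn ih =>
    intro hx
    rw [ht.mem_iff_forall_notMem hm, ht'.mem_iff_forall_notMem hm]
    refine forall₂_congr fun a ha => imp_congr_right fun hne => not_congr (ih _ ?_ ?_)
    all_goals obtain ⟨hma, haD⟩ := hA ha
    · omega
    · exact mem_Ici.2 (by omega)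

theorem eq_of_agree_Ico (ht : IsTiling A C) (ht' : IsTiling A C') (hm : m ∈ A)
    (hmD : m + D ∈ A) (hA : A ⊆ Icc m (m + D)) (h : ∀ n ∈ Ico x (x + D), n ∈ C ↔ n ∈ C') :
    C = C' := by
  ext n
  rcases le_or_gt x n with hxn | hnx
  · exact ht.agree_Ici_of_agree_Ico ht' hm hA h n hxn
  · have hA' : -A ⊆ Icc (-(m + D)) (-(m + D) + D) := fun a ha => by
      obtain ⟨hma, haD⟩ := hA ha
      exact ⟨by omega, by omega⟩
    have hwindow : ∀ k ∈ Ico (-x - D + 1) (-x - D + 1 + D), k ∈ -C ↔ k ∈ -C' := by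
      rintro k ⟨hk₁, hk₂⟩
      exact h (-k) ⟨by omega, by omega⟩
    simpa using ht.neg.agree_Ici_of_agree_Ico ht'.neg (by simpa using hmD) hA' hwindow (-n)
      (mem_Ici.2 (by omega))

theorem periodic_of_window_eq (ht : IsTiling A C) (hm : m ∈ A) (hmD : m + D ∈ A)
    (hA : A ⊆ Icc m (m + D)) {y : ℤ}
    (h : (fun i : Fin D => x + i ∈ C) = fun i : Fin D => y + i ∈ C) :
    Periodic (· ∈ C) (y - x) := by
  have hC := ht.eq_of_agree_Ico (ht.preimage_add_right (y - x)) hm hmD hA (x := x) fun n hn => by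
    obtain ⟨hxn, hnx⟩ := hn
    have := congrFun h ⟨(n - x).toNat, by omega⟩
    rw [Int.toNat_of_nonneg (by omega), add_sub_cancel, add_sub_left_comm, ← add_sub_assoc] at this
    rw [mem_preimage, ← add_sub_assoc]
    exact eq_iff_iff.1 this
  exact fun n => propext (Set.ext_iff.1 hC n).symm

theorem exists_periodic {A : Finset ℤ} (ht : IsTiling (A : Set ℤ) C) :
    ∃ M > 0, Periodic (· ∈ C) M := by
  have hA : A.Nonempty := by exact_mod_cast ht.nonempty
  set D := (A.max' hA - A.min' hA).toNat
  have hmin_le_max := A.min'_le _ (A.max'_mem hA)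
  have hmD : A.min' hA + D = A.max' hA := by omega
  have hAD : (A : Set ℤ) ⊆ Icc (A.min' hA) (A.min' hA + D) := fun a ha =>
    ⟨A.min'_le a ha, hmD ▸ A.le_max' a ha⟩
  obtain ⟨x, y, hxy, hwin⟩ :=
    Finite.exists_ne_map_eq_of_infinite fun x : ℤ => fun i : Fin D => x + i ∈ C
  have hper := ht.periodic_of_window_eq (A.min'_mem hA) (hmD ▸ A.max'_mem hA) hAD hwin
  refine ⟨|y - x|, abs_pos.2 (sub_ne_zero.2 hxy.symm), ?_⟩
  rcases abs_choice (y - x) with h | h <;> rw [h]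
  exacts [hper, hper.neg]

end IsTiling

namespace Function.Periodic

variable {C : Set ℤ} {M : ℤ}

theorem emod_mem_iff (hper : Periodic (· ∈ C) M) (c : ℤ) : c % M ∈ C ↔ c ∈ C := by
  rw [Int.emod_def, mul_comm]
  exact eq_iff_iff.1 (hper.sub_int_mul_eq _)

theorem emod_mem_filter_Ico [DecidablePred (· ∈ C)] (hper : Periodic (· ∈ C) M) (hM : 0 < M)
    {c : ℤ} (hc : c ∈ C) : c % M ∈ {b ∈ Finset.Ico 0 M | b ∈ C} :=
  Finset.mem_filter.2
    ⟨Finset.mem_Ico.2 ⟨Int.emod_nonneg _ hM.ne', Int.emod_lt_of_pos _ hM⟩, (hper.emod_mem_iff c).2 hc⟩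

theorem eq_setOf_exists_add_mul [DecidablePred (· ∈ C)] (hper : Periodic (· ∈ C) M)
    (hM : 0 < M) : C = {c | ∃ b ∈ {b ∈ Finset.Ico 0 M | b ∈ C}, ∃ k : ℤ, c = b + M * k} := by
  ext c
  refine ⟨fun hc => ⟨c % M, hper.emod_mem_filter_Ico hM hc, c / M, ?_⟩, ?_⟩
  · exact (Int.emod_add_mul_ediv c M).symm
  · rintro ⟨b, hb, k, rfl⟩
    rw [mul_comm]
    exact (eq_iff_iff.1 (hper.int_mul k b)).2 (Finset.mem_filter.1 hb).2

end Function.Periodic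

theorem IsTiling.card_mul_card_filter_Ico {A : Finset ℤ} {C : Set ℤ} {M : ℤ}
    [DecidablePred (· ∈ C)] (ht : IsTiling (A : Set ℤ) C) (hper : Periodic (· ∈ C) M)
    (hM : 0 < M) : (A.card : ℤ) * {b ∈ Finset.Ico 0 M | b ∈ C}.card = M := by
  set B := {b ∈ Finset.Ico 0 M | b ∈ C}
  have hcard : (A ×ˢ B).card = (Finset.Ico 0 M).card := by
    refine Finset.card_nbij (fun p => (p.1 + p.2) % M) (fun p _ => ?_) ?_ ?_
    · simp only [Finset.coe_Ico, mem_Ico]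
      exact ⟨Int.emod_nonneg _ hM.ne', Int.emod_lt_of_pos _ hM⟩
    · rintro ⟨a, b⟩ hab ⟨a', b'⟩ hab' h
      simp only [Finset.coe_product, mem_prod, Finset.mem_coe, B, Finset.mem_filter,
        Finset.mem_Ico] at hab hab'
      obtain ⟨t, hdvd⟩ := Int.ModEq.dvd h
      have hc : b' - t * M ∈ C := (eq_iff_iff.1 (hper.sub_int_mul_eq t)).2 hab'.2.2
      obtain ⟨rfl, hb⟩ := ht.eq_and_eq_of_add_eq hab.1 hab.2.2 hab'.1 hc (by linarith)
      have hmod : b % M = b' % M := by rw [hb, Int.sub_mul_emod_self_right]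
      rw [Int.emod_eq_of_lt hab.2.1.1 hab.2.1.2, Int.emod_eq_of_lt hab'.2.1.1 hab'.2.1.2] at hmod
      rw [hmod]
    · intro n hn
      rw [Finset.coe_Ico, mem_Ico] at hn
      obtain ⟨⟨a, c⟩, ⟨ha, hc, rfl⟩, -⟩ := ht n
      refine ⟨(a, c % M), Finset.mem_product.2 ⟨ha, hper.emod_mem_filter_Ico hM hc⟩, ?_⟩
      simp only [Int.add_emod_emod, Int.emod_eq_of_lt hn.1 hn.2]
  rw [Finset.card_product, Int.card_Ico, sub_zero] at hcard
  rw [← Nat.cast_mul, hcard, Int.toNat_of_nonneg hM.le]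

theorem favard_stmt4_general (A : Finset ℤ) (C : Set ℤ)
    (htile : ∀ n : ℤ, ∃! p : ℤ × ℤ, p.1 ∈ A ∧ p.2 ∈ C ∧ p.1 + p.2 = n) :
    ∃ M : ℤ, 0 < M ∧ ∃ B : Finset ℤ,
      (A.card : ℤ) * (B.card : ℤ) = M ∧
      C = {c : ℤ | ∃ b ∈ B, ∃ k : ℤ, c = b + M * k} := by
  classical
  have ht : IsTiling (A : Set ℤ) C := htile
  obtain ⟨M, hM, hper⟩ := ht.exists_periodic
  exact ⟨M, hM, _, ht.card_mul_card_filter_Ico hper hM, hper.eq_setOf_exists_add_mul hM⟩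

/-- Newman's periodicity theorem: if a finite set `A ⊆ ℤ` tiles the integers with
translation set `C`, then the tiling is periodic: there exist `M > 0` and a finite
set `B` with `C = B + Mℤ` and `|A|·|B| = M`. -/
theorem favard_stmt4 (A : Finset ℤ) (hA : A.Nonempty) (C : Set ℤ)
    (htile : ∀ n : ℤ, ∃! p : ℤ × ℤ, p.1 ∈ A ∧ p.2 ∈ C ∧ p.1 + p.2 = n) :
    ∃ M : ℤ, 0 < M ∧ ∃ B : Finset ℤ,
      (A.card : ℤ) * (B.card : ℤ) = M ∧
      C = {c : ℤ | ∃ b ∈ B, ∃ k : ℤ, c = b + M * k} :=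
  favard_stmt4_general A C htile
end

section
/- If Ω ⊂ ℝ is a bounded measurable set of positive measure that tiles ℝ by a translation set T (i.e., the translates Ω + τ, τ ∈ T, are pairwise disjoint up to measure zero and cover ℝ up to measure zero), written Ω ⊕ T = ℝ, and T ⊂ (1/d)ℤ for some integer d ≥ 1, then T is periodic: there exists a rational period p > 0 with T + p = T. -/
open MeasureTheory

private lemma tiling_int_periodic (Ω' : Set ℝ) (M : ℝ) (hb : ∀ y ∈ Ω', |y| ≤ M)
    (hpos : 0 < volume Ω') (S : Set ℤ)
    (htile : ∀ᵐ y : ℝ, ∃! k : ℤ, k ∈ S ∧ y - (k : ℝ) ∈ Ω') :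
    ∃ q : ℤ, 0 < q ∧ ∀ k : ℤ, k ∈ S ↔ k + q ∈ S := by
  classical
  -- the tiling condition simultaneously at all integer shifts
  have hbad : volume {y : ℝ | ¬ ∃! k : ℤ, k ∈ S ∧ y - (k : ℝ) ∈ Ω'} = 0 := ae_iff.mp htile
  have hG : ∀ᵐ y : ℝ, ∀ n : ℤ, ∃! k : ℤ, k ∈ S ∧ (y + (n : ℝ)) - (k : ℝ) ∈ Ω' := by
    rw [ae_all_iff]
    intro n
    rw [ae_iff]
    have h1 : {y : ℝ | ¬ ∃! k : ℤ, k ∈ S ∧ (y + (n : ℝ)) - (k : ℝ) ∈ Ω'}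
        = (· + (n : ℝ)) ⁻¹' {y : ℝ | ¬ ∃! k : ℤ, k ∈ S ∧ y - (k : ℝ) ∈ Ω'} := rfl
    rw [h1, measure_preimage_add_right, hbad]
  -- the columns
  set E : ℤ → Set ℝ := fun j => {y : ℝ | (0 ≤ y ∧ y < 1) ∧ y + (j : ℝ) ∈ Ω'} with hE
  have hEex : ∃ j : ℤ, 0 < volume (E j) := by
    by_contra h
    push_neg at h
    have h0 : ∀ j : ℤ, volume (E j) = 0 := fun j => le_antisymm (h j) zero_le
    have hsub : Ω' ⊆ ⋃ j : ℤ, (· + (-(j : ℝ))) ⁻¹' (E j) := by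
      intro y hy
      refine Set.mem_iUnion.mpr ⟨⌊y⌋, ?_⟩
      have h1 : y + (-(⌊y⌋ : ℝ)) + (⌊y⌋ : ℝ) = y := by ring
      have hmem : y + (-(⌊y⌋ : ℝ)) ∈ E ⌊y⌋ :=
        ⟨⟨by linarith [Int.floor_le y], by linarith [Int.lt_floor_add_one y]⟩,
          by rw [h1]; exact hy⟩
      exact hmem
    have hm : volume Ω' ≤ volume (⋃ j : ℤ, (· + (-(j : ℝ))) ⁻¹' (E j)) :=
      measure_mono hsub
    have h2 : volume (⋃ j : ℤ, (· + (-(j : ℝ))) ⁻¹' (E j)) = 0 :=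
      measure_iUnion_null fun j => by rw [measure_preimage_add_right, h0]
    rw [h2] at hm
    exact absurd (le_antisymm hm zero_le) hpos.ne'
  -- bounds on the set of columns with positive measure
  have hJbd : ∀ j : ℤ, 0 < volume (E j) → -⌈M⌉ - 1 ≤ j ∧ j ≤ ⌈M⌉ := by
    intro j hj
    obtain ⟨y, hy⟩ := nonempty_of_measure_ne_zero hj.ne'
    have h1 := abs_le.mp (hb _ hy.2)
    have h2 : (j : ℝ) ≤ ⌈M⌉ := le_trans (by linarith [hy.1.1]) (Int.le_ceil M)
    have h3 : (-⌈M⌉ - 1 : ℝ) ≤ (j : ℝ) := by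
      have := Int.le_ceil M
      push_cast
      linarith [hy.1.2]
    constructor
    · exact_mod_cast h3
    · exact_mod_cast h2
  obtain ⟨jmax, hjmaxP, hjmaxG⟩ :=
    Int.exists_greatest_of_bdd ⟨⌈M⌉, fun z hz => (hJbd z hz).2⟩ hEex
  obtain ⟨jmin, hjminP, hjminL⟩ :=
    Int.exists_least_of_bdd ⟨-⌈M⌉ - 1, fun z hz => (hJbd z hz).1⟩ hEex
  have hLnn : jmin ≤ jmax := hjmaxG _ hjminP
  -- the null set to avoid
  set Z : Set ℝ := {y : ℝ | ¬ ∀ n : ℤ, ∃! k : ℤ, k ∈ S ∧ (y + (n : ℝ)) - (k : ℝ) ∈ Ω'}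
      ∪ ⋃ j : {j : ℤ // volume (E j) = 0}, E j.1 with hZdef
  have hZ : volume Z = 0 :=
    measure_union_null (ae_iff.mp hG) (measure_iUnion_null fun j => j.2)
  -- a generic point in a column j, reformulated tiling condition
  have hgen : ∀ j : ℤ, 0 < volume (E j) → ∃ y : ℝ, y ∈ E j ∧
      (∀ n : ℤ, ∃! k : ℤ, k ∈ S ∧ y ∈ E (n - k)) ∧
      (∀ j' : ℤ, volume (E j') = 0 → y ∉ E j') := by
    intro j hj
    have hne : volume (E j \ Z) ≠ 0 := by
      intro h0
      have : volume (E j) ≤ volume (E j \ Z) + volume Z :=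
        le_trans (measure_mono (by intro y hy; by_cases h : y ∈ Z
                                   · exact Or.inr h
                                   · exact Or.inl ⟨hy, h⟩)) (measure_union_le _ _)
      rw [h0, hZ] at this
      simp at this
      exact hj.ne' this
    obtain ⟨y, hyE, hyZ⟩ := nonempty_of_measure_ne_zero hne
    rw [hZdef] at hyZ
    simp only [Set.mem_union, Set.mem_iUnion, Set.mem_setOf_eq, not_or, not_exists] at hyZ
    obtain ⟨hyG, hyN⟩ := hyZ
    rw [not_not] at hyG
    have hy01 : 0 ≤ y ∧ y < 1 := hyE.1
    refine ⟨y, hyE, ?_, fun j' hj' => hyN ⟨j', hj'⟩⟩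
    intro n
    obtain ⟨k, ⟨h1, h2⟩, hu⟩ := hyG n
    refine ⟨k, ⟨h1, hy01, ?_⟩, ?_⟩
    · have e : y + ((n - k : ℤ) : ℝ) = (y + (n : ℝ)) - (k : ℝ) := by push_cast; ring
      rw [e]; exact h2
    · rintro k' ⟨h1', _, h2'⟩
      refine hu k' ⟨h1', ?_⟩
      have e : (y + (n : ℝ)) - (k' : ℝ) = y + ((n - k' : ℤ) : ℝ) := by push_cast; ring
      rw [e]; exact h2'
  obtain ⟨y, hyE, hyG, hyN⟩ := hgen jmax hjmaxP
  obtain ⟨y', hyE', hyG', hyN'⟩ := hgen jmin hjminP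
  -- forward determinism key
  have key_max : ∀ n : ℤ, (n ∈ S ↔
      ¬ ∃ i : ℤ, (1 ≤ i ∧ i ≤ jmax - jmin) ∧ (n + i) ∈ S ∧ y ∈ E (jmax - i)) := by
    intro n
    obtain ⟨k, ⟨hkS, hkE⟩, hu⟩ := hyG (n + jmax)
    constructor
    · rintro hn ⟨i, ⟨hi1, hi2⟩, hiS, hiE⟩
      have e1 := hu n ⟨hn, by rw [show n + jmax - n = jmax by ring]; exact hyE⟩
      have e2 := hu (n + i) ⟨hiS, by rw [show n + jmax - (n + i) = jmax - i by ring]; exact hiE⟩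
      omega
    · intro hnot
      by_contra hn
      have hjpos : 0 < volume (E (n + jmax - k)) := by
        rcases (zero_le : 0 ≤ volume (E (n + jmax - k))).lt_or_eq with h | h
        · exact h
        · exact absurd hkE (hyN _ h.symm)
      have jle : n + jmax - k ≤ jmax := hjmaxG _ hjpos
      have jge : jmin ≤ n + jmax - k := hjminL _ hjpos
      have hkn : k ≠ n := fun h => hn (h ▸ hkS)
      exact hnot ⟨k - n, ⟨by omega, by omega⟩,
        by rwa [show n + (k - n) = k by ring],
        by rwa [show jmax - (k - n) = n + jmax - k by ring]⟩
  -- backward determinism key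
  have key_min : ∀ n : ℤ, (n ∈ S ↔
      ¬ ∃ i : ℤ, (1 ≤ i ∧ i ≤ jmax - jmin) ∧ (n - i) ∈ S ∧ y' ∈ E (jmin + i)) := by
    intro n
    obtain ⟨k, ⟨hkS, hkE⟩, hu⟩ := hyG' (n + jmin)
    constructor
    · rintro hn ⟨i, ⟨hi1, hi2⟩, hiS, hiE⟩
      have e1 := hu n ⟨hn, by rw [show n + jmin - n = jmin by ring]; exact hyE'⟩
      have e2 := hu (n - i) ⟨hiS, by rw [show n + jmin - (n - i) = jmin + i by ring]; exact hiE⟩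
      omega
    · intro hnot
      by_contra hn
      have hjpos : 0 < volume (E (n + jmin - k)) := by
        rcases (zero_le : 0 ≤ volume (E (n + jmin - k))).lt_or_eq with h | h
        · exact h
        · exact absurd hkE (hyN' _ h.symm)
      have jle : n + jmin - k ≤ jmax := hjmaxG _ hjpos
      have jge : jmin ≤ n + jmin - k := hjminL _ hjpos
      have hkn : k ≠ n := fun h => hn (h ▸ hkS)
      exact hnot ⟨n - k, ⟨by omega, by omega⟩,
        by rwa [show n - (n - k) = k by ring],
        by rwa [show jmin + (n - k) = n + jmin - k by ring]⟩
  have detF : ∀ a b : ℤ, (∀ i : ℤ, 1 ≤ i → i ≤ jmax - jmin → ((a + i) ∈ S ↔ (b + i) ∈ S)) →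
      (a ∈ S ↔ b ∈ S) := by
    intro a b h
    rw [key_max a, key_max b]
    exact not_congr (exists_congr fun i => and_congr_right fun hi =>
      and_congr_left fun _ => h i hi.1 hi.2)
  have detB : ∀ a b : ℤ, (∀ i : ℤ, 1 ≤ i → i ≤ jmax - jmin → ((a - i) ∈ S ↔ (b - i) ∈ S)) →
      (a ∈ S ↔ b ∈ S) := by
    intro a b h
    rw [key_min a, key_min b]
    exact not_congr (exists_congr fun i => and_congr_right fun hi =>
      and_congr_left fun _ => h i hi.1 hi.2)
  -- propagation of a repeated window
  have main : ∀ a b : ℤ, a < b →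
      (∀ i : ℤ, 1 ≤ i → i ≤ jmax - jmin → ((a + i) ∈ S ↔ (b + i) ∈ S)) →
      ∀ k : ℤ, (k ∈ S ↔ (k + (b - a)) ∈ S) := by
    intro a b hab hw
    have claim : ∀ t : ℕ, ∀ k : ℤ, a + 1 - t ≤ k → k ≤ a + (jmax - jmin) + t →
        (k ∈ S ↔ (k + (b - a)) ∈ S) := by
      intro t
      induction t with
      | zero =>
        intro k h1 h2
        have := hw (k - a) (by omega) (by omega)
        rw [show a + (k - a) = k by ring, show b + (k - a) = k + (b - a) by ring] at this
        exact this
      | succ t ih =>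
        intro k h1 h2
        by_cases hlow : k ≤ a - t
        · refine detF k (k + (b - a)) fun i hi1 hi2 => ?_
          have := ih (k + i) (by omega) (by omega)
          rw [show k + i + (b - a) = k + (b - a) + i by ring] at this
          exact this
        · by_cases hhigh : a + (jmax - jmin) + t < k
          · refine detB k (k + (b - a)) fun i hi1 hi2 => ?_
            have := ih (k - i) (by omega) (by omega)
            rw [show k - i + (b - a) = k + (b - a) - i by ring] at this
            exact this
          · exact ih k (by omega) (by omega)
    intro k
    refine claim (max (a + 1 - k) (k - (a + (jmax - jmin)))).toNat k ?_ ?_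
    · have h1 := Int.self_le_toNat (max (a + 1 - k) (k - (a + (jmax - jmin))))
      have h2 := le_max_left (a + 1 - k) (k - (a + (jmax - jmin)))
      omega
    · have h1 := Int.self_le_toNat (max (a + 1 - k) (k - (a + (jmax - jmin))))
      have h2 := le_max_right (a + 1 - k) (k - (a + (jmax - jmin)))
      omega
  -- pigeonhole
  set F : ℤ → ({i // i ∈ Finset.Icc (1 : ℤ) (jmax - jmin)} → Bool) :=
    fun z i => decide ((z + i.1) ∈ S) with hF
  obtain ⟨a, b, hab, hFab⟩ := Finite.exists_ne_map_eq_of_infinite F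
  have hwin : ∀ i : ℤ, 1 ≤ i → i ≤ jmax - jmin → ((a + i) ∈ S ↔ (b + i) ∈ S) := by
    intro i h1 h2
    have := congrFun hFab ⟨i, Finset.mem_Icc.mpr ⟨h1, h2⟩⟩
    simpa [hF] using decide_eq_decide.mp this
  rcases lt_or_gt_of_ne hab with h | h
  · exact ⟨b - a, by omega, main a b h hwin⟩
  · exact ⟨a - b, by omega, main b a h fun i h1 h2 => (hwin i h1 h2).symm⟩

/-- Periodic tilings of `ℝ` by bounded sets (Lagarias–Wang): if a bounded measurable set
`Ω` of positive measure tiles `ℝ` by a translation set `T ⊆ (1/d)ℤ`, then `T` is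
periodic: there is a rational period `p > 0` with `T + p = T`. -/
theorem favard_stmt15 (Ω : Set ℝ) (hΩm : MeasurableSet Ω) (hΩb : Bornology.IsBounded Ω)
    (hΩpos : 0 < volume Ω) (d : ℕ) (hd : 0 < d) (T : Set ℝ)
    (hT : T ⊆ Set.range (fun k : ℤ => (k : ℝ) / d))
    (htile : ∀ᵐ x : ℝ, ∃! τ : ℝ, τ ∈ T ∧ x - τ ∈ Ω) :
    ∃ p : ℝ, 0 < p ∧ (∃ k : ℤ, p = (k : ℝ) / d) ∧ (fun τ => τ + p) '' T = T := by
  have hd0 : (d : ℝ) ≠ 0 := Nat.cast_ne_zero.mpr hd.ne'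
  have hdpos : (0 : ℝ) < d := Nat.cast_pos.mpr hd
  set S : Set ℤ := {k : ℤ | (k : ℝ) / d ∈ T} with hSdef
  set Ω' : Set ℝ := (fun y : ℝ => y * ((d : ℝ))⁻¹) ⁻¹' Ω with hΩ'def
  -- boundedness of Ω'
  obtain ⟨r, hr⟩ := hΩb.subset_closedBall 0
  have hbΩ : ∀ x ∈ Ω, |x| ≤ r := by
    intro x hx
    have := hr hx
    rwa [Metric.mem_closedBall, Real.dist_eq, sub_zero] at this
  have hb' : ∀ y ∈ Ω', |y| ≤ r * d := by
    intro y hy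
    have h1 := hbΩ _ hy
    rw [abs_mul, abs_inv] at h1
    have h2 : |(d : ℝ)| = (d : ℝ) := abs_of_pos hdpos
    rw [h2] at h1
    have h3 : |y| * (d : ℝ)⁻¹ ≤ r := h1
    calc |y| = |y| * (d : ℝ)⁻¹ * d := by field_simp
    _ ≤ r * d := by nlinarith
  -- positivity of volume Ω'
  have hpos' : 0 < volume Ω' := by
    have h1 : volume Ω' = ENNReal.ofReal |((d : ℝ)⁻¹)⁻¹| * volume Ω :=
      Real.volume_preimage_mul_right (inv_ne_zero hd0) Ω
    rw [inv_inv] at h1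
    rw [h1]
    exact ENNReal.mul_pos (ENNReal.ofReal_pos.mpr (abs_pos.mpr hd0)).ne' hΩpos.ne'
  -- tiling transfer
  have htile' : ∀ᵐ y : ℝ, ∃! k : ℤ, k ∈ S ∧ y - (k : ℝ) ∈ Ω' := by
    rw [ae_iff]
    have hsub : {y : ℝ | ¬ ∃! k : ℤ, k ∈ S ∧ y - (k : ℝ) ∈ Ω'} ⊆
        (fun y : ℝ => y * ((d : ℝ))⁻¹) ⁻¹' {x : ℝ | ¬ ∃! τ : ℝ, τ ∈ T ∧ x - τ ∈ Ω} := by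
      intro y hy
      simp only [Set.mem_setOf_eq, Set.mem_preimage] at hy ⊢
      intro hP
      apply hy
      obtain ⟨τ, ⟨hτT, hτΩ⟩, hu⟩ := hP
      obtain ⟨k, hk⟩ := hT hτT
      simp only at hk
      refine ⟨k, ⟨?_, ?_⟩, ?_⟩
      · show (k : ℝ) / d ∈ T
        rw [hk]; exact hτT
      · show (y - (k : ℝ)) * (d : ℝ)⁻¹ ∈ Ω
        have e : (y - (k : ℝ)) * (d : ℝ)⁻¹ = y * (d : ℝ)⁻¹ - (k : ℝ) / d := by ring
        rw [e, hk]; exact hτΩ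
      · rintro k' ⟨h1, h2⟩
        have h2' : y * (d : ℝ)⁻¹ - (k' : ℝ) / d ∈ Ω := by
          have e : y * (d : ℝ)⁻¹ - (k' : ℝ) / d = (y - (k' : ℝ)) * (d : ℝ)⁻¹ := by ring
          rw [e]; exact h2
        have h3 : (k' : ℝ) / d = τ := hu _ ⟨h1, h2'⟩
        have h4 : (k' : ℝ) / d = (k : ℝ) / d := h3.trans hk.symm
        field_simp at h4
        exact_mod_cast h4
    refine measure_mono_null hsub ?_
    rw [Real.volume_preimage_mul_right (inv_ne_zero hd0), ae_iff.mp htile, mul_zero]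
  obtain ⟨q, hq, hper⟩ := tiling_int_periodic Ω' (r * d) hb' hpos' S htile'
  refine ⟨(q : ℝ) / d, div_pos (by exact_mod_cast hq) hdpos, ⟨q, rfl⟩, ?_⟩
  ext x
  constructor
  · rintro ⟨τ, hτ, rfl⟩
    obtain ⟨k, hk⟩ := hT hτ
    simp only at hk
    have hkS : k ∈ S := by show (k : ℝ) / d ∈ T; rw [hk]; exact hτ
    have h2 : (k + q) ∈ S := (hper k).mp hkS
    have h3 : ((k + q : ℤ) : ℝ) / d ∈ T := h2
    have e : τ + (q : ℝ) / d = ((k + q : ℤ) : ℝ) / d := by rw [← hk]; push_cast; ring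
    show τ + (q : ℝ) / d ∈ T
    rw [e]; exact h3
  · intro hx
    obtain ⟨k, hk⟩ := hT hx
    simp only at hk
    have hkS : k ∈ S := by show (k : ℝ) / d ∈ T; rw [hk]; exact hx
    have h2 : (k - q) ∈ S := (hper (k - q)).mpr (by rwa [sub_add_cancel])
    refine ⟨((k - q : ℤ) : ℝ) / d, h2, ?_⟩
    show ((k - q : ℤ) : ℝ) / d + (q : ℝ) / d = x
    rw [← hk]; push_cast; ring
end
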